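/- arXiv:2208.05774 — 5 statements merged into one kernel-verified Lean document; each statement's English description precedes it below -/
import Mathlib

section
/- Let r ≥ 2 and ℓ ≥ 2 be integers. Then there exists a positive integer k such that for every positive integer m, the number ℓ^m + k is not r-full (i.e., there is a prime p with p ∣ ℓ^m + k but p^r ∤ ℓ^m + k). -/
private lemma keyL {p x k : ℕ} (hx : p ^ 2 ∣ x) (hk1 : p ∣ k) (hk2 : ¬ p ^ 2 ∣ k) :
    p ∣ x + k ∧ ¬ p ^ 2 ∣ (x + k) := by
  refine ⟨dvd_add (((dvd_pow_self p two_ne_zero).trans hx)) hk1, fun h => hk2 ?_⟩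
  exact (Nat.dvd_add_right hx).mp h

theorem stmt_0 (r ℓ : ℕ) (hr : 2 ≤ r) (hℓ : 2 ≤ ℓ) :
    ∃ k : ℕ, 0 < k ∧ ∀ m : ℕ, 0 < m →
      ∃ p : ℕ, p.Prime ∧ p ∣ ℓ ^ m + k ∧ ¬ p ^ r ∣ ℓ ^ m + k := by
  suffices h : ∃ k : ℕ, 0 < k ∧ ∀ m : ℕ, 0 < m →
      ∃ p : ℕ, p.Prime ∧ p ∣ ℓ ^ m + k ∧ ¬ p ^ 2 ∣ ℓ ^ m + k by
    obtain ⟨k, hk, H⟩ := h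
    refine ⟨k, hk, fun m hm => ?_⟩
    obtain ⟨p, hp, h1, h2⟩ := H m hm
    exact ⟨p, hp, h1, fun hc => h2 ((pow_dvd_pow p hr).trans hc)⟩
  by_cases hodd : ∃ p, Nat.Prime p ∧ p ∣ ℓ ∧ p ≠ 2
  · obtain ⟨p, hp, hpl, hp2⟩ := hodd
    have hpu : ∀ u : ℕ, u = 1 ∨ u = 2 → ¬ p ∣ u := by
      rintro u (rfl | rfl) h
      · exact hp.one_lt.ne' (Nat.dvd_one.mp h)
      · exact hp2 ((Nat.prime_dvd_prime_iff_eq hp Nat.prime_two).mp h)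
    by_cases hsq : p ^ 2 ∣ ℓ
    · -- k = p
      have hk2 : ¬ p ^ 2 ∣ p := by
        intro h
        have := Nat.le_of_dvd hp.pos h
        nlinarith [hp.two_le]
      refine ⟨p, hp.pos, fun m hm => ⟨p, hp, ?_, ?_⟩⟩
      · exact (keyL (hsq.trans (dvd_pow_self ℓ hm.ne')) dvd_rfl hk2).1
      · exact (keyL (hsq.trans (dvd_pow_self ℓ hm.ne')) dvd_rfl hk2).2
    · -- k = p * u with u = 1 or 2
      set a := ℓ / p with ha
      have hℓa : ℓ = p * a := (Nat.mul_div_cancel' hpl).symm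
      set u : ℕ := if p ∣ a + 1 then 2 else 1 with hu
      have hu12 : u = 1 ∨ u = 2 := by rw [hu]; split <;> simp
      have hau : ¬ p ∣ a + u := by
        rw [hu]
        split
        · rename_i h1
          intro h2
          have h3 : p ∣ (a + 2) - (a + 1) := Nat.dvd_sub h2 h1
          have he : a + 2 - (a + 1) = 1 := by omega
          rw [he] at h3
          exact hp.one_lt.ne' (Nat.dvd_one.mp h3)
        · rename_i h1; exact h1
      have hpne : p ≠ 0 := hp.pos.ne'
      have hk2 : ¬ p ^ 2 ∣ p * u := by
        rw [pow_two, mul_dvd_mul_iff_left hpne]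
        exact hpu u hu12
      refine ⟨p * u, Nat.mul_pos hp.pos (by rcases hu12 with h | h <;> omega), fun m hm => ⟨p, hp, ?_⟩⟩
      rcases Nat.lt_or_ge m 2 with hm2 | hm2
      · -- m = 1
        have hm1 : m = 1 := by omega
        subst hm1
        rw [pow_one, hℓa, ← Nat.mul_add]
        constructor
        · exact Dvd.intro _ rfl
        · rw [pow_two, mul_dvd_mul_iff_left hpne]
          exact hau
      · -- m ≥ 2
        have hx : p ^ 2 ∣ ℓ ^ m := by
          calc p ^ 2 ∣ ℓ ^ 2 := pow_dvd_pow_of_dvd hpl 2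
          _ ∣ ℓ ^ m := pow_dvd_pow ℓ hm2
        exact keyL hx (dvd_mul_right p u) hk2
  · -- ℓ is a power of 2
    push_neg at hodd
    have h2l : 2 ∣ ℓ := by
      have hmf := Nat.minFac_prime (by omega : ℓ ≠ 1)
      have h := hodd _ hmf (Nat.minFac_dvd ℓ)
      exact h ▸ Nat.minFac_dvd ℓ
    by_cases h4 : 2 ^ 2 ∣ ℓ
    · refine ⟨2, by norm_num, fun m hm => ⟨2, Nat.prime_two, ?_⟩⟩
      exact keyL (h4.trans (dvd_pow_self ℓ hm.ne')) dvd_rfl (by decide)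
    · have hℓ2 : ℓ = 2 := by
        by_contra hne
        set t := ℓ / 2 with ht
        have hℓt : ℓ = 2 * t := (Nat.mul_div_cancel' h2l).symm
        have ht1 : t ≠ 1 := by intro h; rw [h] at hℓt; omega
        have ht0 : t ≠ 0 := by intro h; rw [h] at hℓt; omega
        have hq := Nat.minFac_prime ht1
        have hqd : t.minFac ∣ ℓ := (Nat.minFac_dvd t).trans ⟨2, by omega⟩
        have := hodd _ hq hqd
        apply h4
        obtain ⟨c, hc⟩ := Nat.minFac_dvd t
        rw [this] at hc
        exact ⟨c, by rw [hℓt, hc]; ring⟩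
      subst hℓ2
      refine ⟨10, by norm_num, fun m hm => ?_⟩
      rcases Nat.lt_or_ge m 2 with hm2 | hm2
      · have hm1 : m = 1 := by omega
        subst hm1
        exact ⟨3, Nat.prime_three, by decide, by decide⟩
      · refine ⟨2, Nat.prime_two, ?_⟩
        exact keyL (pow_dvd_pow 2 hm2) (by norm_num) (by decide)
end

section
/- Let ℓ ≥ 2 be a squarefree integer with an odd prime factor q, and suppose q* is a prime of the form q* = ℓs − 1 for some integer s ≥ 2. Set k = ℓ(q* − 1). Then for every positive integer m, ℓ^m + k is not square-full. -/
theorem stmt_3 (ℓ q s : ℕ) (hℓ : 2 ≤ ℓ) (hsf : Squarefree ℓ)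
    (hq : q.Prime) (hqodd : Odd q) (hqℓ : q ∣ ℓ)
    (hs : 2 ≤ s) (hqs : Nat.Prime (ℓ * s - 1)) :
    ∀ m : ℕ, 0 < m →
      ∃ p : ℕ, p.Prime ∧ p ∣ ℓ ^ m + ℓ * (ℓ * s - 1 - 1) ∧
        ¬ p ^ 2 ∣ ℓ ^ m + ℓ * (ℓ * s - 1 - 1) := by
  intro m hm
  have ht : 4 ≤ ℓ * s := by nlinarith
  have hqt : q ∣ ℓ * s := hqℓ.mul_right s
  set N := ℓ ^ (m - 1) + (ℓ * s - 2) with hN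
  have hT : ℓ ^ m + ℓ * (ℓ * s - 1 - 1) = ℓ * N := by
    have h12 : ℓ * s - 1 - 1 = ℓ * s - 2 := by omega
    have hpow : ℓ * ℓ ^ (m - 1) = ℓ ^ m := by
      rw [← pow_succ']
      congr 1
      omega
    rw [h12, hN, Nat.mul_add, hpow]
  -- q does not divide N
  have hqN : ¬ q ∣ N := by
    intro h
    rcases Nat.lt_or_ge m 2 with h1 | h2
    · -- m = 1, so N = ℓ*s - 1 and q ∣ (ℓ*s) - N = 1
      have hm1 : m - 1 = 0 := by omega
      have hNval : N = ℓ * s - 1 := by rw [hN, hm1, pow_zero]; omega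
      have hsub : ℓ * s - N = 1 := by omega
      have : q ∣ 1 := hsub ▸ Nat.dvd_sub hqt h
      exact hq.one_lt.ne' (Nat.dvd_one.mp this)
    · have hp : q ∣ ℓ ^ (m - 1) := dvd_pow hqℓ (by omega)
      have h2' : q ∣ ℓ ^ (m - 1) + ℓ * s := hp.add hqt
      have hsub : (ℓ ^ (m - 1) + ℓ * s) - N = 2 := by rw [hN]; omega
      have hq2 : q ∣ 2 := hsub ▸ Nat.dvd_sub h2' h
      have : q = 2 := (Nat.prime_dvd_prime_iff_eq hq Nat.prime_two).mp hq2
      rw [this] at hqodd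
      exact (Nat.not_odd_iff_even.mpr even_two) hqodd
  -- q divides exactly once
  obtain ⟨a, ha⟩ := hqℓ
  have hqa : ¬ q ∣ a := by
    intro ⟨b, hb⟩
    have : IsUnit q := hsf q ⟨b, by rw [ha, hb]; ring⟩
    exact hq.one_lt.ne' (Nat.isUnit_iff.mp this)
  refine ⟨q, hq, ?_, ?_⟩
  · rw [hT, ha]
    exact ⟨a * N, by ring⟩
  · intro hdvd
    rw [hT, ha] at hdvd
    have : q ∣ a * N := by
      have h' : q * q ∣ q * (a * N) := by
        rw [pow_two] at hdvd
        calc q * q ∣ q * a * N := hdvd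
        _ = q * (a * N) := by ring
      exact (mul_dvd_mul_iff_left hq.pos.ne').mp h'
    rcases (Nat.Prime.dvd_mul hq).mp this with h | h
    · exact hqa h
    · exact hqN h
end

section
/- Let S = { ⌊(3/2)^n⌋ : n = 1, 2, 3, ... }. For every real number α with 0 < α < 1, the set S_α = { ⌊α·s⌋ : s ∈ S } does not contain both 2^3 = 8 and 2^4 = 16. -/
theorem stmt_6 (α : ℝ) (h0 : 0 < α) (h1 : α < 1) :
    ¬ ((∃ n : ℕ, 1 ≤ n ∧ ⌊α * (⌊((3 : ℝ) / 2) ^ n⌋ : ℝ)⌋ = 8) ∧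
       (∃ n : ℕ, 1 ≤ n ∧ ⌊α * (⌊((3 : ℝ) / 2) ^ n⌋ : ℝ)⌋ = 16)) := by
  rintro ⟨⟨n, hn1, hn⟩, m, hm1, hm⟩
  rw [Int.floor_eq_iff] at hn hm
  obtain ⟨hn8, hn9⟩ := hn
  obtain ⟨hm16, hm17⟩ := hm
  set a : ℝ := (⌊((3:ℝ)/2)^n⌋ : ℝ) with hadef
  set b : ℝ := (⌊((3:ℝ)/2)^m⌋ : ℝ) with hbdef
  push_cast at hn8 hn9 hm16 hm17
  have hta : ((3:ℝ)/2)^n < a + 1 := Int.lt_floor_add_one _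
  have hat : a ≤ ((3:ℝ)/2)^n := Int.floor_le _
  have hub : b ≤ ((3:ℝ)/2)^m := Int.floor_le _
  have hbu : ((3:ℝ)/2)^m < b + 1 := Int.lt_floor_add_one _
  have ha8 : (8:ℝ) < a := by nlinarith
  have ha9 : (9:ℝ) ≤ a := by
    rw [hadef] at ha8 ⊢
    have h8 : (8:ℤ) < ⌊((3:ℝ)/2)^n⌋ := by exact_mod_cast ha8
    exact_mod_cast h8
  have hb16 : (16:ℝ) < b := by nlinarith
  have key1 : 16 * a < 9 * b := by nlinarith
  have key2 : 8 * b < 17 * a := by nlinarith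
  rcases le_or_gt m (n+1) with hc | hc
  · have hle : ((3:ℝ)/2)^m ≤ ((3:ℝ)/2)^(n+1) :=
      pow_le_pow_right₀ (by norm_num) hc
    rw [pow_succ] at hle
    nlinarith
  · have hge : ((3:ℝ)/2)^(n+2) ≤ ((3:ℝ)/2)^m :=
      pow_le_pow_right₀ (by norm_num) hc
    have h22 : ((3:ℝ)/2)^(n+2) = (9/4) * ((3:ℝ)/2)^n := by ring
    rw [h22] at hge
    nlinarith
end

section
/- Let 0 < α < 1 and let k be a positive integer such that ⌊α·⌊(3/2)^k⌋⌋ = 8. Then ⌊α·⌊(3/2)^{k+1}⌋⌋ ≤ 14 and ⌊α·⌊(3/2)^{k+2}⌋⌋ ≥ 17. -/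
theorem stmt_7 (α : ℝ) (h0 : 0 < α) (h1 : α < 1) (k : ℕ) (hk : 1 ≤ k)
    (h : ⌊α * (⌊((3 : ℝ) / 2) ^ k⌋ : ℝ)⌋ = 8) :
    ⌊α * (⌊((3 : ℝ) / 2) ^ (k + 1)⌋ : ℝ)⌋ ≤ 14 ∧
    ⌊α * (⌊((3 : ℝ) / 2) ^ (k + 2)⌋ : ℝ)⌋ ≥ 17 := by
  set x : ℝ := ((3 : ℝ) / 2) ^ k with hx
  have hxy : ((3 : ℝ) / 2) ^ (k + 1) = x * (3 / 2) := by rw [pow_succ]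
  have hxz : ((3 : ℝ) / 2) ^ (k + 2) = x * (9 / 4) := by
    rw [pow_add]; ring
  rw [hxy, hxz]
  rw [Int.floor_eq_iff] at h
  obtain ⟨h8, h9⟩ := h
  push_cast at h8 h9
  have hn_le : ((⌊x⌋ : ℝ)) ≤ x := Int.floor_le x
  have hn_gt : x < (⌊x⌋ : ℝ) + 1 := Int.lt_floor_add_one x
  constructor
  · have h15 : ⌊α * (⌊x * (3 / 2 : ℝ)⌋ : ℝ)⌋ < 15 := by
      apply Int.floor_lt.2
      have hm : ((⌊x * (3 / 2 : ℝ)⌋ : ℝ)) ≤ x * (3 / 2) := Int.floor_le _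
      push_cast
      nlinarith [mul_le_mul_of_nonneg_left hm (le_of_lt h0)]
    omega
  · rw [ge_iff_le]
    apply Int.le_floor.2
    have hm2 : x * (9 / 4) - 1 < ((⌊x * (9 / 4 : ℝ)⌋ : ℝ)) := by
      have := Int.lt_floor_add_one (x * (9 / 4 : ℝ))
      linarith
    push_cast
    nlinarith [mul_lt_mul_of_pos_left hm2 h0]
end

section
/- For every positive integer m, there exists a real number α with 0 < α < 1 such that {2^i : 0 ≤ i ≤ m} ⊆ { ⌊α n^2⌋ : n = 1, 2, 3, ... }. In particular, α = 1/(4(2^m + 1)) works. -/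
theorem stmt_9 (m : ℕ) (hm : 0 < m) :
    ∃ α : ℝ, 0 < α ∧ α < 1 ∧ α = 1 / (4 * (2 ^ m + 1)) ∧
      ∀ i : ℕ, i ≤ m → ∃ n : ℕ, 0 < n ∧ ⌊α * (n : ℝ) ^ 2⌋ = (2 ^ i : ℤ) := by
  have h2m : (1:ℝ) ≤ 2 ^ m := by exact_mod_cast Nat.one_le_two_pow (n := m)
  have hNpos : (0:ℝ) < 4 * (2 ^ m + 1) := by positivity
  refine ⟨1 / (4 * (2 ^ m + 1)), by positivity, ?_, rfl, ?_⟩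
  · rw [div_lt_one hNpos]; nlinarith
  intro i hi
  set N : ℕ := 2 ^ m + 1 with hN
  set A : ℕ := 2 ^ (i + 2) * N with hA
  set s : ℕ := Nat.sqrt (A - 1) with hs
  have hApos : 0 < A := by positivity
  refine ⟨s + 1, Nat.succ_pos _, ?_⟩
  have h1 : A ≤ (s + 1) ^ 2 := by
    have h' : A - 1 < (s + 1) ^ 2 := Nat.lt_succ_sqrt' (A - 1)
    omega
  have hsle : s ≤ 2 ^ (m + 1) := by
    have hAle : A - 1 < (2 ^ (m + 1) + 1) ^ 2 := by
      have hA2 : A ≤ 2 ^ (m + 2) * N := by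
        apply Nat.mul_le_mul_right
        exact Nat.pow_le_pow_right (by norm_num) (by omega)
      have he : 2 ^ (m + 2) * N = 2 ^ (2 * m + 2) + 2 ^ (m + 2) := by
        rw [hN]; ring
      have hsq : (2 ^ (m + 1) + 1) ^ 2
          = 2 ^ (2 * m + 2) + 2 ^ (m + 2) + 1 := by ring
      omega
    have := Nat.sqrt_lt'.mpr hAle
    omega
  have h2 : (s + 1) ^ 2 < A + 4 * N := by
    have hsq : s ^ 2 ≤ A - 1 := Nat.sqrt_le' (A - 1)
    have h4N : 4 * N = 2 ^ (m + 2) + 4 := by rw [hN]; ring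
    have hexp : (s + 1) ^ 2 = s ^ 2 + 2 * s + 1 := by ring
    have h2s : 2 * s ≤ 2 ^ (m + 2) := by
      have : 2 * 2 ^ (m + 1) = 2 ^ (m + 2) := by ring
      omega
    omega
  set n : ℕ := s + 1 with hn
  have e1 : (2:ℝ) ^ i * (4 * (2 ^ m + 1)) = (A : ℝ) := by
    rw [hA, hN]; push_cast; ring
  have e2 : ((2:ℝ) ^ i + 1) * (4 * (2 ^ m + 1)) = (A : ℝ) + 4 * (N : ℝ) := by
    rw [hA, hN]; push_cast; ring
  rw [Int.floor_eq_iff]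
  constructor
  · rw [div_mul_eq_mul_div, le_div_iff₀ hNpos, one_mul]
    push_cast
    rw [e1]
    exact_mod_cast h1
  · rw [div_mul_eq_mul_div, div_lt_iff₀ hNpos, one_mul]
    push_cast
    rw [e2]
    exact_mod_cast h2
end
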